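/- Over an arbitrary field K, every T-ideal of the free bicommutative algebra F of countable rank is finitely generated as a T-ideal; consequently every variety of bicommutative algebras over K is defined by finitely many polynomial identities (the Specht property holds for bicommutative algebras). -/

import Mathlib

/-! A substitution `x_i ↦ g i` of the free bicommutative algebra acts on the quadratic part,
which lives in the ideal `Vid` of `K[Y,Z]`, through an algebra endomorphism of `K[Y,Z]`. So the
quadratic parts of a T-ideal form an ideal of `K[Y,Z]` that is stable under the renamings
`yᵢ ↦ y_{θ i}`, `zᵢ ↦ z_{θ i}` along strictly increasing `θ`. For a lexicographic monomial order
compatible with these renamings, Higman's lemma makes the leading monomials well-quasi-ordered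
under "lies above a renaming of", so finitely many elements of the ideal produce, by renaming and
multiplying by a monomial, elements with every leading monomial occurring in the ideal; leading
term reduction then shows that they generate it as a rename-stable ideal. The linear part costs
at most one more generator: a linear substitution turns any element with nonzero linear part
into one with an arbitrary prescribed linear part. -/

open MvPolynomial

variable (K : Type) [Field K] (ι : Type)

/-- The ideal of the polynomial ring `K[Y,Z]` (variables `y_i = X (inl i)`,
`z_j = X (inr j)`) generated by the products `y_i * z_j`; its underlying `K`-vector
space is spanned by the monomials `Y^α Z^β` with `|α| > 0` and `|β| > 0`. -/
noncomputable def Vid : Ideal (MvPolynomial (ι ⊕ ι) K) :=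
  Ideal.span {p | ∃ i j, p = X (Sum.inl i) * X (Sum.inr j)}

/-- The linear polynomial `∑ a_i y_i`. -/
noncomputable def Yp (a : ι →₀ K) : MvPolynomial (ι ⊕ ι) K :=
  a.sum fun i c => C c * X (Sum.inl i)

/-- The linear polynomial `∑ b_j z_j`. -/
noncomputable def Zp (b : ι →₀ K) : MvPolynomial (ι ⊕ ι) K :=
  b.sum fun j c => C c * X (Sum.inr j)

/-- The model `G` of the free bicommutative algebra with generators `x_i` indexed
by `ι`: its elements are pairs (linear part in the `x_i`'s, element of the span of
the `v_{α,β} = Y^α Z^β`). -/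
abbrev GA : Type := (ι →₀ K) × (Vid K ι)

lemma mul_mem_Vid (a b : ι →₀ K) (p q : MvPolynomial (ι ⊕ ι) K)
    (hp : p ∈ Vid K ι) (hq : q ∈ Vid K ι) :
    (Yp K ι a + p) * (Zp K ι b + q) ∈ Vid K ι := by
  have hYZ : Yp K ι a * Zp K ι b ∈ Vid K ι := by
    rw [Yp, Zp, Finsupp.sum, Finsupp.sum, Finset.sum_mul_sum]
    refine Submodule.sum_mem _ fun i _ => Submodule.sum_mem _ fun j _ => ?_
    have h : (C (a i) * X (Sum.inl i)) * (C (b j) * X (Sum.inr j))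
        = (C (a i) * C (b j)) * (X (Sum.inl i) * X (Sum.inr j) :
          MvPolynomial (ι ⊕ ι) K) := by ring
    rw [h]
    exact Ideal.mul_mem_left _ _ (Ideal.subset_span ⟨i, j, rfl⟩)
  have e : (Yp K ι a + p) * (Zp K ι b + q)
      = Yp K ι a * Zp K ι b + (Yp K ι a * q + (p * Zp K ι b + p * q)) := by ring
  rw [e]
  exact add_mem hYZ (add_mem (Ideal.mul_mem_left _ _ hq)
    (add_mem (Ideal.mul_mem_right _ _ hp) (Ideal.mul_mem_left _ _ hq)))

/-- The multiplication of `G`: `x_i ∘ x_j = y_i z_j`, `x_i ∘ v_{α,β} = v_{α+ε_i,β}`,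
`v_{α,β} ∘ x_j = v_{α,β+ε_j}`, `v_{α,β} ∘ v_{γ,δ} = v_{α+γ,β+δ}`, extended bilinearly. -/
noncomputable instance : Mul (GA K ι) :=
  ⟨fun u v => (0, ⟨(Yp K ι u.1 + (u.2 : MvPolynomial (ι ⊕ ι) K)) *
      (Zp K ι v.1 + (v.2 : MvPolynomial (ι ⊕ ι) K)),
    mul_mem_Vid K ι u.1 v.1 _ _ u.2.2 v.2.2⟩)⟩

/-- The generator `x_i` of `G`. -/
noncomputable def xE (i : ι) : GA K ι := (Finsupp.single i 1, 0)

/-- The basis element `v_{α,β}` of `G²`, as a predicate on elements of `G`. -/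
def IsVElem (w : GA K ι) (α β : ι →₀ ℕ) : Prop :=
  w.1 = 0 ∧ (w.2 : MvPolynomial (ι ⊕ ι) K) = monomial (Finsupp.sumElim α β) 1

/-- The square `G²` of `G`: the linear span of all products. -/
noncomputable def Gsq : Submodule K (GA K ι) := Submodule.span K {w | ∃ u v : GA K ι, w = u * v}

/-- Two-sided ideals of the (nonassociative) algebra `G`: `K`-subspaces absorbing
multiplication on both sides. -/
def IsTwoSidedIdeal (I : Submodule K (GA K ι)) : Prop :=
  ∀ (a : GA K ι), ∀ x ∈ I, a * x ∈ I ∧ x * a ∈ I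

/-- A T-ideal of the free bicommutative algebra `F ≅ G` of countable rank: a
two-sided ideal invariant under all (`K`-linear, multiplicative) endomorphisms. -/
def IsTIdeal (I : Submodule K (GA K ℕ)) : Prop :=
  IsTwoSidedIdeal K ℕ I ∧
  ∀ e : GA K ℕ →ₗ[K] GA K ℕ, (∀ a b : GA K ℕ, e (a * b) = e a * e b) →
    ∀ x ∈ I, e x ∈ I

/-- The T-ideal generated by a set: the smallest T-ideal containing it. -/
noncomputable def TIdealGen (T : Set (GA K ℕ)) : Submodule K (GA K ℕ) :=
  sInf {I : Submodule K (GA K ℕ) | IsTIdeal K I ∧ T ⊆ ↑I}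


theorem Set.PartiallyWellOrderedOn.exists_finset_forall_exists_rel {α : Type*}
    {r : α → α → Prop} {s : Set α} (hs : s.PartiallyWellOrderedOn r) :
    ∃ B : Finset α, ↑B ⊆ s ∧ ∀ a ∈ s, ∃ b ∈ B, r b a := by
  classical
  by_contra! h
  have : Nonempty α := ⟨(h ∅ (by simp)).choose⟩
  choose! next hnext_mem hnext using h
  -- `B n` collects the first `n` terms of a bad sequence; `next (B n)` is the next term.
  let B : ℕ → Finset α := fun n => (fun B => insert (next B) B)^[n] ∅
  have hBs : ∀ n, (B n : Set α) ⊆ s := by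
    intro n
    induction n with
    | zero => simp [B]
    | succ n ih =>
      simpa [B, Function.iterate_succ_apply', Set.insert_subset_iff] using ⟨hnext_mem _ ih, ih⟩
  have hB_mono : Monotone B := monotone_nat_of_le_succ fun n => by
    simp only [B, Function.iterate_succ_apply']; exact Finset.subset_insert _ _
  obtain ⟨i, j, hij, hr⟩ := hs.exists_lt (f := fun n => next (B n)) fun n => hnext_mem _ (hBs n)
  exact hnext (B j) (hBs j) _ (hB_mono hij (by
    simp only [B, Function.iterate_succ_apply']; exact Finset.mem_insert_self _ _)) hr

theorem List.SublistForall₂.exists_strictMono_getD {α : Type*} {r : α → α → Prop} {d : α}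
    (hd : ∀ a, r d a) {l₁ l₂ : List α} (h : List.SublistForall₂ r l₁ l₂) :
    ∃ θ : ℕ → ℕ, StrictMono θ ∧ ∀ i, r (l₁.getD i d) (l₂.getD (θ i) d) := by
  induction h with
  | nil => exact ⟨id, strictMono_id, fun _ => hd _⟩
  | cons hab _ ih =>
    obtain ⟨θ, hθ, hle⟩ := ih
    refine ⟨fun k => Nat.casesOn k 0 fun k => θ k + 1, strictMono_nat_of_lt_succ ?_, ?_⟩
    · rintro (_ | k)
      · exact Nat.succ_pos _
      · exact Nat.succ_lt_succ (hθ k.lt_succ_self)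
    · rintro (_ | i)
      · simpa using hab
      · simpa using hle i
  | cons_right _ ih =>
    obtain ⟨θ, hθ, hle⟩ := ih
    exact ⟨fun k => θ k + 1, fun _ _ h => Nat.succ_lt_succ (hθ h), fun i => by simpa using hle i⟩

theorem Finsupp.Lex.strictMono_mapDomain {α β N : Type*} [LinearOrder α] [LinearOrder β]
    [AddCommMonoid N] [LinearOrder N] {φ : α → β} (hφ : StrictMono φ) :
    StrictMono fun a : Lex (α →₀ N) => toLex (mapDomain φ (ofLex a)) := by
  intro a b hab
  obtain ⟨i, hi, hlt⟩ := Finsupp.Lex.lt_iff.mp hab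
  refine Finsupp.Lex.lt_iff.mpr ⟨φ i, fun j hj => ?_, ?_⟩
  · simp only [ofLex_toLex]
    by_cases hj' : j ∈ Set.range φ
    · obtain ⟨k, rfl⟩ := hj'
      rw [mapDomain_apply hφ.injective, mapDomain_apply hφ.injective]
      exact hi k (hφ.lt_iff_lt.mp hj)
    · rw [mapDomain_of_notMem_range _ _ hj', mapDomain_of_notMem_range _ _ hj']
  · simpa [mapDomain_apply hφ.injective] using hlt

namespace MonomialOrder

variable {σ τ : Type*}

noncomputable def domCongr (m : MonomialOrder τ) (e : σ ≃ τ) : MonomialOrder σ where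
  syn := m.syn
  toSyn := (Finsupp.domCongr e).trans m.toSyn
  toSyn_monotone a b hab := m.toSyn_monotone
    (show Finsupp.domCongr e a ≤ Finsupp.domCongr e b from fun t => by simpa using hab (e.symm t))

open scoped MonomialOrder

variable (m : MonomialOrder σ)

theorem degree_rename {R : Type*} [CommSemiring R] {ρ : σ → σ} (hρ : Function.Injective ρ)
    (hmono : ∀ a b, a ≼[m] b → Finsupp.mapDomain ρ a ≼[m] Finsupp.mapDomain ρ b)
    (p : MvPolynomial σ R) :
    m.degree (rename ρ p) = Finsupp.mapDomain ρ (m.degree p) := by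
  classical
  rcases eq_or_ne p 0 with rfl | hp
  · simp
  have hsupp := support_rename_of_injective (p := p) hρ
  have hrp : rename ρ p ≠ 0 := by
    simpa using (rename_injective ρ hρ).ne hp
  apply m.toSyn.injective
  apply le_antisymm
  · obtain ⟨e, he, hρe⟩ := Finset.mem_image.mp (hsupp ▸ m.degree_mem_support hrp)
    rw [← hρe]
    exact hmono _ _ (m.le_degree he)
  · exact m.le_degree (hsupp ▸ Finset.mem_image_of_mem _ (m.degree_mem_support hp))

theorem le_of_forall_exists_degree_eq {k : Type*} [Field k]
    {U V : Submodule k (MvPolynomial σ k)} (hVU : V ≤ U)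
    (h : ∀ p ∈ U, p ≠ 0 → ∃ q ∈ V, q ≠ 0 ∧ m.degree q = m.degree p) : U ≤ V := by
  suffices ∀ d, ∀ p ∈ U, m.toSyn (m.degree p) = d → p ∈ V from fun p hp => this _ p hp rfl
  intro d
  induction d using WellFoundedLT.induction with
  | _ d ih =>
  intro p hp hd
  rcases eq_or_ne p 0 with rfl | hp0
  · exact V.zero_mem
  obtain ⟨q, hqV, hq0, hqp⟩ := h p hp hp0
  set c := m.leadingCoeff p / m.leadingCoeff q
  have hr : p - c • q ∈ V := by
    rcases eq_or_ne (p - c • q) 0 with hr0 | hr0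
    · simp [hr0]
    refine ih _ ?_ _ (U.sub_mem hp (U.smul_mem c (hVU hqV))) rfl
    have hcoeff : (p - c • q).coeff (m.degree p) = 0 := by
      have hq : q.coeff (m.degree q) ≠ 0 := m.coeff_degree_ne_zero_iff.mpr hq0
      simp [c, ← hqp, MonomialOrder.leadingCoeff, hq]
    have hne : m.degree (p - c • q) ≠ m.degree p := fun heq =>
      m.coeff_degree_ne_zero_iff.mpr hr0 (heq ▸ hcoeff)
    rw [← hd]
    refine lt_of_le_of_ne ?_ (m.toSyn.injective.ne hne)
    refine m.degree_sub_le.trans (max_le le_rfl ?_)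
    exact m.degree_smul_le.trans (hqp ▸ le_rfl)
  simpa using V.add_mem hr (V.smul_mem c hqV)

end MonomialOrder

def RenameLE (n m : (ℕ ⊕ ℕ) →₀ ℕ) : Prop :=
  ∃ θ : ℕ → ℕ, StrictMono θ ∧ Finsupp.mapDomain (Sum.map θ θ) n ≤ m

noncomputable def pairList (n : (ℕ ⊕ ℕ) →₀ ℕ) : List (ℕ × ℕ) :=
  (List.range (n.support.sup (Sum.elim id id) + 1)).map fun i => (n (.inl i), n (.inr i))

theorem getD_pairList (n : (ℕ ⊕ ℕ) →₀ ℕ) (i : ℕ) :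
    (pairList n).getD i 0 = (n (.inl i), n (.inr i)) := by
  by_cases hi : i < n.support.sup (Sum.elim id id) + 1
  · simp [pairList, hi]
  have hvanish : ∀ s : ℕ ⊕ ℕ, Sum.elim id id s = i → n s = 0 := fun s hs => by
    by_contra hs0
    have := Finset.le_sup (f := Sum.elim id id) (Finsupp.mem_support_iff.mpr hs0)
    omega
  simp [pairList, hi, hvanish (.inl i) rfl, hvanish (.inr i) rfl]
  rfl

theorem partiallyWellOrderedOn_renameLE :
    (Set.univ : Set ((ℕ ⊕ ℕ) →₀ ℕ)).PartiallyWellOrderedOn RenameLE := by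
  refine Set.partiallyWellOrderedOn_iff_exists_lt.mpr fun f _ => ?_
  -- Higman's lemma, for monomials encoded as lists of exponent pairs `(n (inl i), n (inr i))`
  have hHigman := Set.PartiallyWellOrderedOn.partiallyWellOrderedOn_sublistForall₂ (· ≤ ·)
    (Set.isPWO_of_wellQuasiOrderedLE (Set.univ : Set (ℕ × ℕ)))
  obtain ⟨i, j, hij, hsub⟩ := hHigman.exists_lt (f := fun k => pairList (f k)) fun _ _ _ => trivial
  obtain ⟨θ, hθ, hle⟩ :=
    hsub.exists_strictMono_getD (d := 0) fun _ => ⟨Nat.zero_le _, Nat.zero_le _⟩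
  refine ⟨i, j, hij, θ, hθ, fun s => ?_⟩
  by_cases hs : s ∈ Set.range (Sum.map θ θ)
  · obtain ⟨t, rfl⟩ := hs
    rw [Finsupp.mapDomain_apply (hθ.injective.sumMap hθ.injective)]
    rcases t with k | k <;> have hk := hle k <;> rw [getD_pairList, getD_pairList] at hk
    exacts [hk.1, hk.2]
  · simp [Finsupp.mapDomain_of_notMem_range _ _ hs]

-- Lexicographic order for the variable order `y₀ < z₀ < y₁ < z₁ < ⋯` (codes `2i`, `2i + 1`),
-- comparing exponents from the largest variable down, so that renaming along a strictly
-- increasing `θ` preserves it.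
noncomputable def interleavedLex : MonomialOrder (ℕ ⊕ ℕ) :=
  MonomialOrder.lex.domCongr (Equiv.natSumNatEquivNat.trans OrderDual.toDual)

theorem strictMono_natSumNatEquivNat_sumMap {θ : ℕ → ℕ} (hθ : StrictMono θ) :
    StrictMono (Equiv.natSumNatEquivNat ∘ Sum.map θ θ ∘ Equiv.natSumNatEquivNat.symm) := by
  have key : ∀ s t : ℕ ⊕ ℕ, Equiv.natSumNatEquivNat s < Equiv.natSumNatEquivNat t →
      Equiv.natSumNatEquivNat (Sum.map θ θ s) < Equiv.natSumNatEquivNat (Sum.map θ θ t) := by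
    rintro (i | i) (j | j) h <;>
      simp only [Equiv.natSumNatEquivNat_apply, Sum.map_inl, Sum.map_inr, Sum.elim_inl,
        Sum.elim_inr] at h ⊢ <;>
      have := hθ.le_iff_le (a := i) (b := j) <;> have := hθ.lt_iff_lt (a := i) (b := j) <;> omega
  intro a b hab
  exact key _ _ (by rwa [Equiv.apply_symm_apply, Equiv.apply_symm_apply])

theorem interleavedLex_degree_rename {R : Type*} [CommSemiring R] {θ : ℕ → ℕ} (hθ : StrictMono θ)
    (p : MvPolynomial (ℕ ⊕ ℕ) R) :
    interleavedLex.degree (rename (Sum.map θ θ) p) =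
      Finsupp.mapDomain (Sum.map θ θ) (interleavedLex.degree p) := by
  set e := Equiv.natSumNatEquivNat.trans OrderDual.toDual
  have hconj : ∀ a : (ℕ ⊕ ℕ) →₀ ℕ, Finsupp.equivMapDomain e (Finsupp.mapDomain (Sum.map θ θ) a) =
      Finsupp.mapDomain (e ∘ Sum.map θ θ ∘ e.symm) (Finsupp.equivMapDomain e a) := fun a => by
    simp only [Finsupp.equivMapDomain_eq_mapDomain, ← Finsupp.mapDomain_comp]
    congr 1
    ext s
    simp
  refine interleavedLex.degree_rename (hθ.injective.sumMap hθ.injective) (fun a b hab => ?_) p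
  change toLex (Finsupp.equivMapDomain e _) ≤ toLex (Finsupp.equivMapDomain e _)
  rw [hconj, hconj]
  exact (Finsupp.Lex.strictMono_mapDomain (strictMono_natSumNatEquivNat_sumMap hθ).dual).monotone
    hab

section RenameStable

variable {K}

def IsRenameStable (I : Ideal (MvPolynomial (ℕ ⊕ ℕ) K)) : Prop :=
  ∀ θ : ℕ → ℕ, StrictMono θ → ∀ p ∈ I, rename (Sum.map θ θ) p ∈ I

theorem IsRenameStable.inf {I J : Ideal (MvPolynomial (ℕ ⊕ ℕ) K)} (hI : IsRenameStable I)
    (hJ : IsRenameStable J) : IsRenameStable (I ⊓ J) :=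
  fun θ hθ p hp => ⟨hI θ hθ p hp.1, hJ θ hθ p hp.2⟩

theorem IsRenameStable.exists_degree_eq {J : Ideal (MvPolynomial (ℕ ⊕ ℕ) K)}
    (hJ : IsRenameStable J) {f : MvPolynomial (ℕ ⊕ ℕ) K} (hfJ : f ∈ J) (hf0 : f ≠ 0)
    {d : (ℕ ⊕ ℕ) →₀ ℕ} (hd : RenameLE (interleavedLex.degree f) d) :
    ∃ q ∈ J, q ≠ 0 ∧ interleavedLex.degree q = d := by
  classical
  obtain ⟨θ, hθ, hle⟩ := hd
  have hren : rename (Sum.map θ θ) f ≠ 0 := by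
    simpa using (rename_injective _ (hθ.injective.sumMap hθ.injective)).ne hf0
  set μ := d - Finsupp.mapDomain (Sum.map θ θ) (interleavedLex.degree f)
  refine ⟨monomial μ 1 * rename (Sum.map θ θ) f, J.mul_mem_left _ (hJ θ hθ f hfJ),
    mul_ne_zero (by simp) hren, ?_⟩
  rw [interleavedLex.degree_mul (by simp) hren, interleavedLex.degree_monomial, if_neg one_ne_zero,
    interleavedLex_degree_rename hθ, tsub_add_cancel_of_le hle]

theorem IsRenameStable.exists_finset {I : Ideal (MvPolynomial (ℕ ⊕ ℕ) K)}
    (hI : IsRenameStable I) :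
    ∃ F : Finset (MvPolynomial (ℕ ⊕ ℕ) K), ↑F ⊆ (I : Set (MvPolynomial (ℕ ⊕ ℕ) K)) ∧
      ∀ J : Ideal _, IsRenameStable J → ↑F ⊆ (J : Set (MvPolynomial (ℕ ⊕ ℕ) K)) → I ≤ J := by
  classical
  obtain ⟨B, hBD, hB⟩ := (partiallyWellOrderedOn_renameLE.mono (Set.subset_univ
    (interleavedLex.degree '' {p | p ∈ I ∧ p ≠ 0}))).exists_finset_forall_exists_rel
  have hlift : ∀ b ∈ B, ∃ f ∈ I, f ≠ 0 ∧ interleavedLex.degree f = b := fun b hb => by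
    obtain ⟨f, ⟨hfI, hf0⟩, hfb⟩ := hBD hb
    exact ⟨f, hfI, hf0, hfb⟩
  choose! f hfI hf0 hfb using hlift
  refine ⟨B.image f, by simpa [Set.subset_def] using hfI, fun J hJ hFJ => ?_⟩
  have hIJ : IsRenameStable (I ⊓ J) := hI.inf hJ
  have hle := interleavedLex.le_of_forall_exists_degree_eq (U := I.restrictScalars K)
    (V := (I ⊓ J).restrictScalars K) (fun p hp => hp.1) fun p hp hp0 => by
      obtain ⟨b, hb, hbp⟩ := hB _ ⟨p, ⟨hp, hp0⟩, rfl⟩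
      have hfJ : f b ∈ J := hFJ (Finset.mem_coe.mpr (Finset.mem_image_of_mem f hb))
      exact hIJ.exists_degree_eq ⟨hfI b hb, hfJ⟩ (hf0 b hb) (by rwa [hfb b hb])
  exact fun p hp => (hle hp).2

end RenameStable

section Substitution

variable {K ι}

theorem Yp_eq_linearCombination (a : ι →₀ K) :
    Yp K ι a = Finsupp.linearCombination K (fun i => X (Sum.inl i)) a := by
  simp [Yp, Finsupp.linearCombination_apply, C_mul']

theorem Zp_eq_linearCombination (a : ι →₀ K) :
    Zp K ι a = Finsupp.linearCombination K (fun i => X (Sum.inr i)) a := by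
  simp [Zp, Finsupp.linearCombination_apply, C_mul']

noncomputable def leftPoly : GA K ι →ₗ[K] MvPolynomial (ι ⊕ ι) K :=
  Finsupp.linearCombination K (fun i => X (Sum.inl i)) ∘ₗ LinearMap.fst K _ _ +
    (Vid K ι).subtype.restrictScalars K ∘ₗ LinearMap.snd K _ _

noncomputable def rightPoly : GA K ι →ₗ[K] MvPolynomial (ι ⊕ ι) K :=
  Finsupp.linearCombination K (fun i => X (Sum.inr i)) ∘ₗ LinearMap.fst K _ _ +
    (Vid K ι).subtype.restrictScalars K ∘ₗ LinearMap.snd K _ _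

theorem leftPoly_apply (u : GA K ι) : leftPoly u = Yp K ι u.1 + u.2 := by
  simp [leftPoly, Yp_eq_linearCombination]

theorem rightPoly_apply (u : GA K ι) : rightPoly u = Zp K ι u.1 + u.2 := by
  simp [rightPoly, Zp_eq_linearCombination]

theorem GA.fst_mul (u v : GA K ι) : (u * v).1 = 0 := rfl

theorem GA.coe_snd_mul (u v : GA K ι) :
    ((u * v).2 : MvPolynomial (ι ⊕ ι) K) = leftPoly u * rightPoly v := by
  rw [leftPoly_apply, rightPoly_apply]
  rfl

noncomputable def substAlgHom (g : ι → GA K ι) :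
    MvPolynomial (ι ⊕ ι) K →ₐ[K] MvPolynomial (ι ⊕ ι) K :=
  aeval (Sum.elim (fun i => leftPoly (g i)) (fun i => rightPoly (g i)))

-- The generators `yᵢ zⱼ` of `Vid` go to `leftPoly (g i) * rightPoly (g j) = (g i * g j).2`.
theorem Vid_le_comap_substAlgHom (g : ι → GA K ι) :
    Vid K ι ≤ (Vid K ι).comap (substAlgHom g) :=
  Ideal.span_le.mpr fun _ ⟨i, j, hp⟩ => by
    simp [hp, substAlgHom, ← GA.coe_snd_mul]

noncomputable def substVid (g : ι → GA K ι) : Vid K ι →ₗ[K] Vid K ι where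
  toFun p := ⟨substAlgHom g p, Vid_le_comap_substAlgHom g p.2⟩
  map_add' _ _ := Subtype.ext (map_add _ _ _)
  map_smul' _ _ := Subtype.ext (map_smul _ _ _)

noncomputable def substEnd (g : ι → GA K ι) : GA K ι →ₗ[K] GA K ι :=
  (Finsupp.linearCombination K g).coprod (LinearMap.inr K _ _ ∘ₗ substVid g)

theorem substEnd_fst (g : ι → GA K ι) (u : GA K ι) :
    (substEnd g u).1 = (Finsupp.linearCombination K g u.1).1 := by
  simp [substEnd]

theorem leftPoly_substEnd (g : ι → GA K ι) (u : GA K ι) :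
    leftPoly (substEnd g u) = substAlgHom g (leftPoly u) := by
  suffices leftPoly ∘ₗ substEnd g = (substAlgHom g).toLinearMap ∘ₗ leftPoly from
    LinearMap.congr_fun this u
  refine LinearMap.prod_ext (Finsupp.lhom_ext fun i c => ?_) (LinearMap.ext fun p => ?_)
  · simp [substEnd, substAlgHom, leftPoly]
  · simp [substEnd, substVid, leftPoly]

theorem rightPoly_substEnd (g : ι → GA K ι) (u : GA K ι) :
    rightPoly (substEnd g u) = substAlgHom g (rightPoly u) := by
  suffices rightPoly ∘ₗ substEnd g = (substAlgHom g).toLinearMap ∘ₗ rightPoly from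
    LinearMap.congr_fun this u
  refine LinearMap.prod_ext (Finsupp.lhom_ext fun i c => ?_) (LinearMap.ext fun p => ?_)
  · simp [substEnd, substAlgHom, rightPoly]
  · simp [substEnd, substVid, rightPoly]

theorem substEnd_mul (g : ι → GA K ι) (u v : GA K ι) :
    substEnd g (u * v) = substEnd g u * substEnd g v := by
  refine Prod.ext (by simp [substEnd_fst, GA.fst_mul]) (Subtype.ext ?_)
  rw [GA.coe_snd_mul, leftPoly_substEnd, rightPoly_substEnd, ← map_mul, ← GA.coe_snd_mul]
  simp [substEnd, substVid, GA.fst_mul]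

theorem exists_substEnd_fst_eq {x₀ : GA K ι} (hx₀ : x₀.1 ≠ 0) (a : ι →₀ K) :
    ∃ g : ι → GA K ι, (substEnd g x₀).1 = a := by
  classical
  obtain ⟨i, hi⟩ := Finsupp.ne_iff.mp hx₀
  refine ⟨Pi.single i ((x₀.1 i)⁻¹ • ((a, 0) : GA K ι)), ?_⟩
  simp [substEnd_fst, smul_smul, mul_inv_cancel₀ hi]

end Substitution

section PolyPart

variable {K ι}

noncomputable def polyPart (S : Submodule K (GA K ι)) : Submodule K (MvPolynomial (ι ⊕ ι) K) :=
  (S.comap (LinearMap.inr K _ _)).map ((Vid K ι).subtype.restrictScalars K)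

variable {S : Submodule K (GA K ι)}

theorem coe_mem_polyPart {v : Vid K ι} :
    (v : MvPolynomial (ι ⊕ ι) K) ∈ polyPart S ↔ ((0, v) : GA K ι) ∈ S := by
  simp [polyPart]

theorem mem_Vid_of_mem_polyPart {p : MvPolynomial (ι ⊕ ι) K} (hp : p ∈ polyPart S) :
    p ∈ Vid K ι := by
  obtain ⟨v, -, rfl⟩ := hp
  exact v.2

theorem mem_iff_coe_snd_mem_polyPart {x : GA K ι} (hx : x.1 = 0) :
    x ∈ S ↔ (x.2 : MvPolynomial (ι ⊕ ι) K) ∈ polyPart S := by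
  rw [coe_mem_polyPart, ← hx]

theorem X_mul_mem_polyPart (hS : IsTwoSidedIdeal K ι S) (s : ι ⊕ ι)
    {p : MvPolynomial (ι ⊕ ι) K} (hp : p ∈ polyPart S) : X s * p ∈ polyPart S := by
  obtain ⟨v, hv, rfl⟩ := hp
  rcases s with i | i
  · have h := (mem_iff_coe_snd_mem_polyPart (GA.fst_mul _ _)).mp (hS (xE K ι i) _ hv).1
    simpa [GA.coe_snd_mul, leftPoly, rightPoly, xE] using h
  · have h := (mem_iff_coe_snd_mem_polyPart (GA.fst_mul _ _)).mp (hS (xE K ι i) _ hv).2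
    simpa [GA.coe_snd_mul, leftPoly, rightPoly, xE, mul_comm] using h

noncomputable def polyIdeal (S : Submodule K (GA K ι)) (hS : IsTwoSidedIdeal K ι S) :
    Ideal (MvPolynomial (ι ⊕ ι) K) :=
  { polyPart S with
    smul_mem' := fun c p hp => by
      induction c using MvPolynomial.induction_on generalizing p with
      | C a => rw [smul_eq_mul, C_mul']; exact (polyPart S).smul_mem a hp
      | add c₁ c₂ h₁ h₂ => rw [add_smul]; exact (polyPart S).add_mem (h₁ p hp) (h₂ p hp)
      | mul_X c s ih =>
        rw [smul_eq_mul, mul_assoc]; exact ih _ (X_mul_mem_polyPart hS s hp) }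

theorem mem_polyIdeal {hS : IsTwoSidedIdeal K ι S} {p : MvPolynomial (ι ⊕ ι) K} :
    p ∈ polyIdeal S hS ↔ p ∈ polyPart S := Iff.rfl

theorem substAlgHom_xE (θ : ι → ι) :
    substAlgHom (fun k => xE K ι (θ k)) = rename (Sum.map θ θ) := by
  refine algHom_ext fun s => ?_
  rcases s with i | i <;>
    simp [substAlgHom, leftPoly, rightPoly, xE]

end PolyPart

section TIdeal

variable {K}

theorem IsTIdeal.substEnd_mem {S : Submodule K (GA K ℕ)} (hS : IsTIdeal K S) (g : ℕ → GA K ℕ)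
    {x : GA K ℕ} (hx : x ∈ S) : substEnd g x ∈ S :=
  hS.2 _ (substEnd_mul g) x hx

-- Substituting `x_k ↦ x_{θ k}` acts on the quadratic part as the renaming along `θ`.
theorem IsTIdeal.isRenameStable_polyIdeal {S : Submodule K (GA K ℕ)} (hS : IsTIdeal K S) :
    IsRenameStable (polyIdeal S hS.1) := by
  rintro θ - _ ⟨v, hv, rfl⟩
  have h := hS.substEnd_mem (fun k => xE K ℕ (θ k)) hv
  rw [mem_iff_coe_snd_mem_polyPart (by simp [substEnd_fst])] at h
  simpa [mem_polyIdeal, substEnd, substVid, substAlgHom_xE] using h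

theorem isTIdeal_TIdealGen (T : Set (GA K ℕ)) : IsTIdeal K (TIdealGen K T) := by
  simp only [TIdealGen]
  refine ⟨fun a x hx => ⟨?_, ?_⟩, fun e he x hx => ?_⟩ <;>
    refine Submodule.mem_sInf.mpr fun J hJ => ?_ <;> have hxJ := Submodule.mem_sInf.mp hx J hJ
  exacts [(hJ.1.1 a x hxJ).1, (hJ.1.1 a x hxJ).2, hJ.1.2 e he x hxJ]

theorem subset_TIdealGen (T : Set (GA K ℕ)) : T ⊆ TIdealGen K T :=
  fun _ hx => Submodule.mem_sInf.mpr fun _ hJ => hJ.2 hx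

theorem IsTIdeal.eq_TIdealGen {I : Submodule K (GA K ℕ)} (hI : IsTIdeal K I) {T : Set (GA K ℕ)}
    (hTI : T ⊆ I) (h : ∀ J, IsTIdeal K J → T ⊆ J → I ≤ J) : I = TIdealGen K T :=
  le_antisymm (h _ (isTIdeal_TIdealGen T) (subset_TIdealGen T)) (sInf_le ⟨hI, hTI⟩)

theorem IsTIdeal.exists_finset_forall_mem_of_fst_eq_zero {I : Submodule K (GA K ℕ)}
    (hI : IsTIdeal K I) :
    ∃ T : Finset (GA K ℕ), ↑T ⊆ (I : Set (GA K ℕ)) ∧ ∀ J, IsTIdeal K J →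
      ↑T ⊆ (J : Set (GA K ℕ)) → ∀ x ∈ I, x.1 = 0 → x ∈ J := by
  classical
  obtain ⟨F, hFI, hF⟩ := hI.isRenameStable_polyIdeal.exists_finset
  refine ⟨(F.subtype (· ∈ Vid K ℕ)).image fun v => (0, v), ?_, fun J hJ hTJ x hx hx1 => ?_⟩
  · intro x hx
    obtain ⟨v, hvF, -, rfl⟩ := by simpa using hx
    exact coe_mem_polyPart.mp (hFI hvF)
  · have hFJ : ↑F ⊆ (polyIdeal J hJ.1 : Set (MvPolynomial (ℕ ⊕ ℕ) K)) := fun f hf => by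
      have hfV := mem_Vid_of_mem_polyPart (hFI hf)
      exact coe_mem_polyPart (v := ⟨f, hfV⟩).mpr
        (hTJ (Finset.mem_image_of_mem _ ((Finset.mem_subtype (a := ⟨f, hfV⟩)).mpr hf)))
    rw [mem_iff_coe_snd_mem_polyPart hx1] at hx ⊢
    exact hF _ hJ.isRenameStable_polyIdeal hFJ hx

theorem IsTIdeal.exists_finset_forall_exists_fst_eq {I : Submodule K (GA K ℕ)}
    (hI : IsTIdeal K I) :
    ∃ T : Finset (GA K ℕ), ↑T ⊆ (I : Set (GA K ℕ)) ∧ ∀ J, IsTIdeal K J →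
      ↑T ⊆ (J : Set (GA K ℕ)) → ∀ x ∈ I, ∃ y ∈ I ⊓ J, y.1 = x.1 := by
  by_cases hlin : ∃ x₀ ∈ I, x₀.1 ≠ 0
  · obtain ⟨x₀, hx₀I, hx₀⟩ := hlin
    refine ⟨{x₀}, by simpa using hx₀I, fun J hJ hTJ x _ => ?_⟩
    obtain ⟨g, hg⟩ := exists_substEnd_fst_eq hx₀ x.1
    exact ⟨substEnd g x₀, ⟨hI.substEnd_mem g hx₀I, hJ.substEnd_mem g (by simpa using hTJ)⟩, hg⟩
  · push Not at hlin
    exact ⟨∅, by simp, fun J _ _ x hx => ⟨0, zero_mem _, (hlin x hx).symm⟩⟩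

end TIdeal

/-- The Specht property for bicommutative algebras: over an arbitrary field `K`,
every T-ideal of the free bicommutative algebra of countable rank is finitely
generated as a T-ideal; consequently every variety of bicommutative algebras over
`K` is defined by finitely many polynomial identities. -/
theorem specht_property_bicommutative :
    ∀ I : Submodule K (GA K ℕ), IsTIdeal K I →
      ∃ T : Finset (GA K ℕ), I = TIdealGen K ↑T := by
  classical
  intro I hI
  obtain ⟨T₀, hT₀I, hT₀⟩ := hI.exists_finset_forall_mem_of_fst_eq_zero
  obtain ⟨T₁, hT₁I, hT₁⟩ := hI.exists_finset_forall_exists_fst_eq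
  refine ⟨T₀ ∪ T₁, hI.eq_TIdealGen (by simpa using ⟨hT₀I, hT₁I⟩) fun J hJ hTJ x hx => ?_⟩
  rw [Finset.coe_union, Set.union_subset_iff] at hTJ
  obtain ⟨y, ⟨hyI, hyJ⟩, hxy⟩ := hT₁ J hJ hTJ.2 x hx
  have hrest : x - y ∈ J := hT₀ J hJ hTJ.1 _ (I.sub_mem hx hyI) (by simp [hxy])
  simpa using J.add_mem hrest hyJ
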